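/- There is an absolute constant C > 0 such that the following holds. For every n ≥ 1, every pair of probability vectors p, q ∈ [0,1]^n (i.e., ∑_{i=1}^n p_i = ∑_{i=1}^n q_i = 1), and every δ ∈ (0,1]: |d_TV(F_δ(p), F_δ(q)) − δ·d_TV(p,q)| ≤ C·δ², where F_δ(p) denotes the product distribution over {0,1}^n with mean vector (1 − e^{−δ·p_i})_{i=1,...,n}, d_TV(p,q) = (1/2)·∑_{i=1}^n |p_i − q_i|, and d_TV(F_δ(p), F_δ(q)) = (1/2)·∑_{x∈{0,1}^n} |F_δ(p)(x) − F_δ(q)(x)|. Moreover, the upper deviation is one-sided: d_TV(F_δ(p), F_δ(q)) ≤ δ·d_TV(p,q). -/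

import Mathlib

/-- The product distribution over `{0,1}^n` with mean vector `p`. -/
noncomputable def prodDist {n : ℕ} (p : Fin n → ℝ) : (Fin n → Bool) → ℝ :=
  fun x => ∏ i, if x i then p i else 1 - p i

/-- Total variation distance between two distributions on a finite set:
half the L1 distance. -/
noncomputable def tvDist {α : Type*} [Fintype α] (P Q : α → ℝ) : ℝ :=
  (1/2) * ∑ x, |P x - Q x|

/-- `F_δ(p)`: the product distribution over `{0,1}^n` with mean vector
`(1 − e^{−δ p_i})_i`. -/
noncomputable def Fdelta {n : ℕ} (δ : ℝ) (p : Fin n → ℝ) : (Fin n → Bool) → ℝ :=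
  prodDist (fun i => 1 - Real.exp (-(δ * p i)))

/-!
Write `F = F_δ`. Since `∑ p_i = 1`, `F(p)` gives mass `e^{-δ}` to `0` and `e^{δ(p_i-1)} - e^{-δ}`
to the unit vector `e_i`, so on vectors of weight at most one the `ℓ¹`-distance between `F(p)` and
`F(q)` is `∑_i |e^{δ(p_i-1)} - e^{δ(q_i-1)}|`, which lies between `δ e^{-δ} ‖p - q‖₁` and
`δ ‖p - q‖₁`. By Weierstrass' product inequality, a product distribution with means `r_i` puts
mass at most `(∑ r_i)² ≤ δ²` on the remaining vectors. This gives the two-sided bound with `C = 1`.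

For the one-sided bound, `e^{-(a+b)t} = e^{-at} e^{-bt}` says that `F_{a+b}(p)` is the law of the
coordinatewise OR of independent samples of `F_a(p)` and `F_b(p)`. Total variation is subadditive
under this operation, so `d_TV(F_δ(p), F_δ(q)) ≤ k d_TV(F_{δ/k}(p), F_{δ/k}(q)) ≤
δ d_TV(p, q) + δ² / k` for every `k ≥ 1`; let `k → ∞`.
-/

open Finset Real

section TotalVariation

variable {α β γ : Type*} [Fintype α] [Fintype β] [Fintype γ]

noncomputable def pushforward [DecidableEq γ] (f : α → γ) (P : α → ℝ) (c : γ) : ℝ :=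
  ∑ a with f a = c, P a

lemma tvDist_pushforward_le [DecidableEq γ] (f : α → γ) (P Q : α → ℝ) :
    tvDist (pushforward f P) (pushforward f Q) ≤ tvDist P Q := by
  unfold tvDist pushforward
  gcongr
  calc ∑ c, |∑ a with f a = c, P a - ∑ a with f a = c, Q a|
      ≤ ∑ c, ∑ a with f a = c, |P a - Q a| := by
        gcongr with c
        rw [← sum_sub_distrib]
        exact abs_sum_le_sum_abs _ _
    _ = ∑ a, |P a - Q a| := sum_fiberwise _ _ _

lemma tvDist_mul_le {P P' : α → ℝ} {Q Q' : β → ℝ} (hP' : ∀ a, 0 ≤ P' a) (hQ : ∀ b, 0 ≤ Q b)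
    (hP'1 : ∑ a, P' a = 1) (hQ1 : ∑ b, Q b = 1) :
    tvDist (fun x : α × β => P x.1 * Q x.2) (fun x => P' x.1 * Q' x.2) ≤
      tvDist P P' + tvDist Q Q' := by
  unfold tvDist
  rw [← mul_add]
  gcongr
  calc ∑ x : α × β, |P x.1 * Q x.2 - P' x.1 * Q' x.2|
      ≤ ∑ x : α × β, (|P x.1 - P' x.1| * Q x.2 + P' x.1 * |Q x.2 - Q' x.2|) := by
        gcongr with x
        rw [show P x.1 * Q x.2 - P' x.1 * Q' x.2
            = (P x.1 - P' x.1) * Q x.2 + P' x.1 * (Q x.2 - Q' x.2) by ring]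
        refine (abs_add_le _ _).trans_eq ?_
        rw [abs_mul, abs_mul, abs_of_nonneg (hQ _), abs_of_nonneg (hP' _)]
    _ = ∑ a, |P a - P' a| + ∑ b, |Q b - Q' b| := by
        simp only [Fintype.sum_prod_type, sum_add_distrib, ← mul_sum, ← sum_mul, hQ1, hP'1,
          mul_one, one_mul]

end TotalVariation

lemma one_sub_sum_le_prod_one_sub {ι : Type*} (s : Finset ι) {f : ι → ℝ}
    (hf : ∀ i ∈ s, f i ∈ Set.Icc (0 : ℝ) 1) : 1 - ∑ i ∈ s, f i ≤ ∏ i ∈ s, (1 - f i) := by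
  classical
  induction s using Finset.induction with
  | empty => simp
  | insert a s ha ih =>
    rw [sum_insert ha, prod_insert ha]
    obtain ⟨hfa0, hfa1⟩ := hf a (mem_insert_self a s)
    have hs : 0 ≤ ∑ i ∈ s, f i := sum_nonneg fun i hi => (hf i (mem_insert_of_mem hi)).1
    have := mul_le_mul_of_nonneg_left (ih fun i hi => hf i (mem_insert_of_mem hi))
      (sub_nonneg.2 hfa1)
    nlinarith

section ProductDistribution

variable {n : ℕ}

lemma prodDist_nonneg {r : Fin n → ℝ} (hr : ∀ i, r i ∈ Set.Icc (0 : ℝ) 1) (x : Fin n → Bool) :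
    0 ≤ prodDist r x :=
  prod_nonneg fun i _ => by split_ifs <;> linarith [hr i |>.1, hr i |>.2]

lemma sum_prodDist (r : Fin n → ℝ) : ∑ x, prodDist r x = 1 := by
  unfold prodDist
  rw [← Fintype.prod_sum (fun i (b : Bool) => if b then r i else 1 - r i)]
  simp

lemma prodDist_sup (r s : Fin n → ℝ) :
    prodDist (fun i => 1 - (1 - r i) * (1 - s i)) =
      pushforward (fun x : (Fin n → Bool) × (Fin n → Bool) => x.1 ⊔ x.2)
        (fun x => prodDist r x.1 * prodDist s x.2) := by
  ext x
  simp only [pushforward, prodDist, sum_filter]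
  rw [← (Equiv.arrowProdEquivProdArrow (Fin n) (fun _ => Bool) (fun _ => Bool)).sum_comp]
  have h_factor (w : Fin n → Bool × Bool) :
      (if (w · |>.1) ⊔ (w · |>.2) = x then
        (∏ i, if (w i).1 then r i else 1 - r i) * ∏ i, if (w i).2 then s i else 1 - s i else 0) =
      ∏ i, if ((w i).1 || (w i).2) = x i then
        (if (w i).1 then r i else 1 - r i) * (if (w i).2 then s i else 1 - s i) else 0 := by
    rw [Fintype.prod_ite_zero, ← prod_mul_distrib]
    congr 1
    simp [funext_iff]
  simp only [Equiv.arrowProdEquivProdArrow_apply, h_factor]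
  rw [← Fintype.prod_sum fun i (u : Bool × Bool) => if (u.1 || u.2) = x i then
    (if u.1 then r i else 1 - r i) * (if u.2 then s i else 1 - s i) else 0]
  refine prod_congr rfl fun i _ => ?_
  cases x i
  · simp [Fintype.sum_prod_type]
  · simp [Fintype.sum_prod_type]
    ring


def unitVec (i : Fin n) : Fin n → Bool := fun j => decide (j = i)

lemma unitVec_injective : Function.Injective (unitVec (n := n)) := fun i j h => by
  simpa [unitVec] using congrFun h i

lemma unitVec_ne_bot (i : Fin n) : unitVec i ≠ ⊥ := fun h => by
  simpa [unitVec] using congrFun h i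

def weightLeOne (n : ℕ) : Finset (Fin n → Bool) := insert ⊥ (univ.image unitVec)

lemma sum_weightLeOne (f : (Fin n → Bool) → ℝ) :
    ∑ x ∈ weightLeOne n, f x = f ⊥ + ∑ i, f (unitVec i) := by
  rw [weightLeOne, sum_insert fun h => ?_, sum_image fun i _ j _ h => unitVec_injective h]
  obtain ⟨i, -, hi⟩ := mem_image.1 h
  exact unitVec_ne_bot i hi

lemma prodDist_bot (r : Fin n → ℝ) : prodDist r ⊥ = ∏ i, (1 - r i) := by
  simp [prodDist]

lemma prodDist_unitVec (r : Fin n → ℝ) (i : Fin n) :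
    prodDist r (unitVec i) = r i * ∏ j ∈ univ.erase i, (1 - r j) := by
  rw [prodDist, ← mul_prod_erase univ _ (mem_univ i)]
  congr 1
  · simp [unitVec]
  · exact prod_congr rfl fun j hj => by simp [unitVec, ne_of_mem_erase hj]

lemma sum_compl_weightLeOne_prodDist_le {r : Fin n → ℝ} (hr : ∀ i, r i ∈ Set.Icc (0 : ℝ) 1) :
    ∑ x ∈ (weightLeOne n)ᶜ, prodDist r x ≤ (∑ i, r i) ^ 2 := by
  set S := ∑ i, r i
  have h_erase (i : Fin n) : 1 - S ≤ ∏ j ∈ univ.erase i, (1 - r j) :=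
    have : ∑ j ∈ univ.erase i, r j ≤ S :=
      sum_le_sum_of_subset_of_nonneg (erase_subset i univ) fun j _ _ => (hr j).1
    (sub_le_sub_left this 1).trans (one_sub_sum_le_prod_one_sub _ fun j _ => hr j)
  have h_low : 1 - S ^ 2 ≤ ∑ x ∈ weightLeOne n, prodDist r x := by
    rw [sum_weightLeOne, prodDist_bot]
    simp_rw [prodDist_unitVec]
    calc 1 - S ^ 2 = (1 - S) + ∑ i, r i * (1 - S) := by rw [← sum_mul]; ring
      _ ≤ _ := add_le_add (one_sub_sum_le_prod_one_sub _ fun j _ => hr j)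
          (sum_le_sum fun i _ => mul_le_mul_of_nonneg_left (h_erase i) (hr i).1)
  have := sum_add_sum_compl (weightLeOne n) (prodDist r)
  rw [sum_prodDist] at this
  linarith

end ProductDistribution

lemma exp_mul_sub_le_exp_sub_exp (x y : ℝ) : exp y * (x - y) ≤ exp x - exp y := by
  have := add_one_le_exp (x - y)
  rw [show exp x = exp y * exp (x - y) by rw [← exp_add]; ring_nf]
  nlinarith [exp_pos y]

lemma exp_sub_exp_le_exp_mul_sub (x y : ℝ) : exp x - exp y ≤ exp x * (x - y) := by
  have := add_one_le_exp (-(x - y))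
  rw [show exp y = exp x * exp (-(x - y)) by rw [← exp_add]; ring_nf]
  nlinarith [exp_pos x]

lemma abs_exp_sub_exp_le_of_nonpos {x y : ℝ} (hx : x ≤ 0) (hy : y ≤ 0) :
    |exp x - exp y| ≤ |x - y| := by
  wlog hxy : y ≤ x generalizing x y
  · rw [abs_sub_comm x, abs_sub_comm (exp x)]
    exact this hy hx (le_of_not_ge hxy)
  rw [abs_of_nonneg (sub_nonneg.2 (exp_le_exp.2 hxy)), abs_of_nonneg (sub_nonneg.2 hxy)]
  have := exp_sub_exp_le_exp_mul_sub x y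
  nlinarith [exp_le_one_iff.2 hx]

lemma exp_mul_abs_sub_le_abs_exp_sub_exp {c x y : ℝ} (hx : -c ≤ x) (hy : -c ≤ y) :
    exp (-c) * |x - y| ≤ |exp x - exp y| := by
  wlog hxy : y ≤ x generalizing x y
  · rw [abs_sub_comm x, abs_sub_comm (exp x)]
    exact this hy hx (le_of_not_ge hxy)
  rw [abs_of_nonneg (sub_nonneg.2 (exp_le_exp.2 hxy)), abs_of_nonneg (sub_nonneg.2 hxy)]
  have := exp_mul_sub_le_exp_sub_exp x y
  nlinarith [exp_le_exp.2 hy]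

section Fdelta

variable {n : ℕ}

lemma one_sub_exp_neg_mem_Icc {t : ℝ} (ht : 0 ≤ t) : 1 - exp (-t) ∈ Set.Icc (0 : ℝ) 1 :=
  ⟨sub_nonneg.2 (exp_le_one_iff.2 (neg_nonpos.2 ht)), sub_le_self _ (exp_pos _).le⟩

lemma Fdelta_nonneg {δ : ℝ} {p : Fin n → ℝ} (h : ∀ i, 0 ≤ δ * p i) (x : Fin n → Bool) :
    0 ≤ Fdelta δ p x :=
  prodDist_nonneg (fun i => one_sub_exp_neg_mem_Icc (h i)) x

lemma sum_Fdelta (δ : ℝ) (p : Fin n → ℝ) : ∑ x, Fdelta δ p x = 1 :=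
  sum_prodDist _

lemma Fdelta_add (a b : ℝ) (p : Fin n → ℝ) :
    Fdelta (a + b) p = pushforward (fun x : (Fin n → Bool) × (Fin n → Bool) => x.1 ⊔ x.2)
      (fun x => Fdelta a p x.1 * Fdelta b p x.2) := by
  unfold Fdelta
  rw [← prodDist_sup]
  congr 1
  ext i
  rw [sub_sub_cancel, sub_sub_cancel, add_mul, neg_add, exp_add]

lemma tvDist_Fdelta_add_le {p q : Fin n → ℝ} (hp : ∀ i, 0 ≤ p i) (hq : ∀ i, 0 ≤ q i)
    {a b : ℝ} (ha : 0 ≤ a) (hb : 0 ≤ b) :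
    tvDist (Fdelta (a + b) p) (Fdelta (a + b) q) ≤
      tvDist (Fdelta a p) (Fdelta a q) + tvDist (Fdelta b p) (Fdelta b q) := by
  rw [Fdelta_add, Fdelta_add]
  exact (tvDist_pushforward_le _ _ _).trans <| tvDist_mul_le
    (Fdelta_nonneg fun i => mul_nonneg ha (hq i)) (Fdelta_nonneg fun i => mul_nonneg hb (hp i))
    (sum_Fdelta _ _) (sum_Fdelta _ _)

lemma tvDist_Fdelta_natCast_mul_le {p q : Fin n → ℝ} (hp : ∀ i, 0 ≤ p i) (hq : ∀ i, 0 ≤ q i)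
    {ε : ℝ} (hε : 0 ≤ ε) (k : ℕ) :
    tvDist (Fdelta (k * ε) p) (Fdelta (k * ε) q) ≤ k * tvDist (Fdelta ε p) (Fdelta ε q) := by
  induction k with
  | zero => simp [Fdelta, tvDist]
  | succ k ih =>
    rw [Nat.cast_succ, add_one_mul, add_one_mul]
    exact (tvDist_Fdelta_add_le hp hq (by positivity) hε).trans (by linarith)

lemma Fdelta_bot {p : Fin n → ℝ} (hp1 : ∑ i, p i = 1) (δ : ℝ) : Fdelta δ p ⊥ = exp (-δ) := by
  rw [Fdelta, prodDist_bot]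
  simp only [sub_sub_cancel]
  rw [← exp_sum, sum_neg_distrib, ← mul_sum, hp1, mul_one]

lemma Fdelta_unitVec {p : Fin n → ℝ} (hp1 : ∑ i, p i = 1) (δ : ℝ) (i : Fin n) :
    Fdelta δ p (unitVec i) = exp (δ * (p i - 1)) - exp (-δ) := by
  rw [Fdelta, prodDist_unitVec]
  simp only [sub_sub_cancel]
  rw [← exp_sum, sum_neg_distrib, ← mul_sum, sum_erase_eq_sub (mem_univ i), hp1, sub_mul,
    ← exp_add]
  ring_nf

lemma sum_compl_weightLeOne_Fdelta_le {p : Fin n → ℝ} (hp : ∀ i, 0 ≤ p i) (hp1 : ∑ i, p i = 1)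
    {δ : ℝ} (hδ : 0 ≤ δ) : ∑ x ∈ (weightLeOne n)ᶜ, Fdelta δ p x ≤ δ ^ 2 := by
  have hr (i : Fin n) := one_sub_exp_neg_mem_Icc (mul_nonneg hδ (hp i))
  refine (sum_compl_weightLeOne_prodDist_le hr).trans (pow_le_pow_left₀ ?_ ?_ 2)
  · exact sum_nonneg fun i _ => (hr i).1
  · calc ∑ i, (1 - exp (-(δ * p i))) ≤ ∑ i, δ * p i :=
          sum_le_sum fun i _ => by linarith [add_one_le_exp (-(δ * p i))]
      _ = δ := by rw [← mul_sum, hp1, mul_one]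

lemma abs_Fdelta_unitVec_sub_le {p q : Fin n → ℝ} (hp : ∀ i, p i ∈ Set.Icc (0 : ℝ) 1)
    (hq : ∀ i, q i ∈ Set.Icc (0 : ℝ) 1) (hp1 : ∑ i, p i = 1) (hq1 : ∑ i, q i = 1)
    {δ : ℝ} (hδ : 0 ≤ δ) (i : Fin n) :
    |Fdelta δ p (unitVec i) - Fdelta δ q (unitVec i)| ≤ δ * |p i - q i| ∧
      δ * exp (-δ) * |p i - q i| ≤ |Fdelta δ p (unitVec i) - Fdelta δ q (unitVec i)| := by
  have h_diff : |δ * (p i - 1) - δ * (q i - 1)| = δ * |p i - q i| := by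
    rw [← mul_sub, sub_sub_sub_cancel_right, abs_mul, abs_of_nonneg hδ]
  rw [Fdelta_unitVec hp1, Fdelta_unitVec hq1, sub_sub_sub_cancel_right]
  constructor
  · rw [← h_diff]
    exact abs_exp_sub_exp_le_of_nonpos (mul_nonpos_of_nonneg_of_nonpos hδ (by linarith [hp i |>.2]))
      (mul_nonpos_of_nonneg_of_nonpos hδ (by linarith [hq i |>.2]))
  · rw [mul_comm δ, mul_assoc, ← h_diff]
    exact exp_mul_abs_sub_le_abs_exp_sub_exp (by nlinarith [hp i |>.1]) (by nlinarith [hq i |>.1])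

lemma abs_tvDist_Fdelta_sub_le {p q : Fin n → ℝ} (hp : ∀ i, p i ∈ Set.Icc (0 : ℝ) 1)
    (hq : ∀ i, q i ∈ Set.Icc (0 : ℝ) 1) (hp1 : ∑ i, p i = 1) (hq1 : ∑ i, q i = 1)
    {δ : ℝ} (hδ : 0 ≤ δ) :
    |tvDist (Fdelta δ p) (Fdelta δ q) - δ * ((1/2) * ∑ i, |p i - q i|)| ≤ δ ^ 2 := by
  set D := ∑ i, |p i - q i|
  set L := ∑ i, |Fdelta δ p (unitVec i) - Fdelta δ q (unitVec i)|
  have h_low : ∑ x ∈ weightLeOne n, |Fdelta δ p x - Fdelta δ q x| = L := by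
    rw [sum_weightLeOne, Fdelta_bot hp1, Fdelta_bot hq1, sub_self, abs_zero, zero_add]
  have hL_le : L ≤ δ * D := by
    rw [mul_sum]
    exact sum_le_sum fun i _ => (abs_Fdelta_unitVec_sub_le hp hq hp1 hq1 hδ i).1
  have hL_ge : δ * exp (-δ) * D ≤ L := by
    rw [mul_sum]
    exact sum_le_sum fun i _ => (abs_Fdelta_unitVec_sub_le hp hq hp1 hq1 hδ i).2
  have hD : D ≤ 2 := by
    calc D ≤ ∑ i, (p i + q i) :=
          sum_le_sum fun i _ => abs_sub_le_iff.2 ⟨by linarith [hq i |>.1], by linarith [hp i |>.1]⟩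
      _ = 2 := by rw [sum_add_distrib, hp1, hq1]; norm_num
  have h_tail : ∑ x ∈ (weightLeOne n)ᶜ, |Fdelta δ p x - Fdelta δ q x| ≤ 2 * δ ^ 2 := by
    have hFp := Fdelta_nonneg (p := p) fun i => mul_nonneg hδ (hp i).1
    have hFq := Fdelta_nonneg (p := q) fun i => mul_nonneg hδ (hq i).1
    calc ∑ x ∈ (weightLeOne n)ᶜ, |Fdelta δ p x - Fdelta δ q x|
        ≤ ∑ x ∈ (weightLeOne n)ᶜ, (Fdelta δ p x + Fdelta δ q x) :=
          sum_le_sum fun x _ => abs_sub_le_iff.2 ⟨by linarith [hFq x], by linarith [hFp x]⟩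
      _ ≤ δ ^ 2 + δ ^ 2 := by
          rw [sum_add_distrib]
          exact add_le_add (sum_compl_weightLeOne_Fdelta_le (fun i => (hp i).1) hp1 hδ)
            (sum_compl_weightLeOne_Fdelta_le (fun i => (hq i).1) hq1 hδ)
      _ = 2 * δ ^ 2 := by ring
  have h_split := sum_add_sum_compl (weightLeOne n) fun x => |Fdelta δ p x - Fdelta δ q x|
  have h_tail_nonneg : 0 ≤ ∑ x ∈ (weightLeOne n)ᶜ, |Fdelta δ p x - Fdelta δ q x| :=
    sum_nonneg fun x _ => abs_nonneg _
  have h_exp : 1 - δ ≤ exp (-δ) := by linarith [add_one_le_exp (-δ)]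
  have hD0 : 0 ≤ D := sum_nonneg fun i _ => abs_nonneg _
  unfold tvDist
  rw [abs_le]
  constructor <;> nlinarith [mul_le_mul_of_nonneg_left h_exp (mul_nonneg hδ hD0)]

end Fdelta

theorem stmt13 : ∃ C : ℝ, 0 < C ∧
    ∀ (n : ℕ), 1 ≤ n → ∀ (p q : Fin n → ℝ),
      (∀ i, p i ∈ Set.Icc (0:ℝ) 1) → (∀ i, q i ∈ Set.Icc (0:ℝ) 1) →
      ∑ i, p i = 1 → ∑ i, q i = 1 →
      ∀ δ : ℝ, δ ∈ Set.Ioc (0:ℝ) 1 →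
        |tvDist (Fdelta δ p) (Fdelta δ q) - δ * ((1/2) * ∑ i, |p i - q i|)| ≤ C * δ ^ 2 ∧
        tvDist (Fdelta δ p) (Fdelta δ q) ≤ δ * ((1/2) * ∑ i, |p i - q i|) := by
  refine ⟨1, one_pos, fun n _ p q hp hq hp1 hq1 δ hδ => ?_⟩
  have h_two_sided {ε : ℝ} (hε : 0 ≤ ε) := abs_tvDist_Fdelta_sub_le hp hq hp1 hq1 hε
  refine ⟨by simpa using h_two_sided hδ.1.le, ?_⟩
  set D := (1/2) * ∑ i, |p i - q i|
  have h_approx (k : ℕ) (hk : 1 ≤ k) :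
      tvDist (Fdelta δ p) (Fdelta δ q) ≤ δ * D + δ ^ 2 / k := by
    have hk0 : (0 : ℝ) < k := by exact_mod_cast hk
    have h_split := tvDist_Fdelta_natCast_mul_le (fun i => (hp i).1) (fun i => (hq i).1)
      (div_nonneg hδ.1.le hk0.le) k
    rw [mul_div_cancel₀ _ hk0.ne'] at h_split
    have h_small := (abs_le.1 (h_two_sided (div_nonneg hδ.1.le hk0.le))).2
    calc _ ≤ k * tvDist (Fdelta (δ / k) p) (Fdelta (δ / k) q) := h_split
      _ ≤ k * (δ / k * D + (δ / k) ^ 2) := by gcongr; linarith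
      _ = δ * D + δ ^ 2 / k := by field_simp
  have h_lim := (tendsto_const_div_atTop_nhds_zero_nat (δ ^ 2)).const_add (δ * D)
  simpa using ge_of_tendsto h_lim (Filter.eventually_atTop.2 ⟨1, h_approx⟩)
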